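/- arXiv:1607.05610 — 3 statements merged into one kernel-verified Lean document; each statement's English description precedes it below -/
import Mathlib

section
/- The ideal ED_fin on D = {(i,j) ∈ ω² : i ≥ j}, consisting of all A ⊆ D for which there exists m ∈ ω such that |A ∩ ({k} × ω)| ≤ m for every k ∈ ω, is homogeneous. -/
open Set Filter

/-- `I` is an ideal on the countable set `X`: closed under subsets and finite
unions, contains all finite sets, and does not contain the whole set. -/
def IsIdeal {X : Type*} (I : Set (Set X)) : Prop :=
  (∀ A B : Set X, A ∈ I → B ⊆ A → B ∈ I) ∧
  (∀ A B : Set X, A ∈ I → B ∈ I → A ∪ B ∈ I) ∧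
  (∀ A : Set X, A.Finite → A ∈ I) ∧
  (Set.univ : Set X) ∉ I

/-- The restriction `I|A = {B ∩ A : B ∈ I}`. -/
def restr {X : Type*} (I : Set (Set X)) (A : Set X) : Set (Set X) :=
  {C | ∃ B ∈ I, C = B ∩ A}

/-- `I|A ≅ I|B`: there is a bijection `f : B → A` such that for every
`C ⊆ A`, `C ∈ I|A ↔ f⁻¹[C] ∈ I|B`. -/
def RIso {X : Type*} (I : Set (Set X)) (A B : Set X) : Prop :=
  ∃ f : X → X, Set.BijOn f B A ∧
    ∀ C : Set X, C ⊆ A → (C ∈ restr I A ↔ B ∩ f ⁻¹' C ∈ restr I B)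

/-- The homogeneity family `H(I) = {A : I|A ≅ I}`. -/
def HF {X : Type*} (I : Set (Set X)) : Set (Set X) := {A | RIso I A Set.univ}

/-- `I` is homogeneous if `H(I) = I⁺`. -/
def HomogIdeal {X : Type*} (I : Set (Set X)) : Prop := HF I = {A | A ∉ I}

/-- `I` is anti-homogeneous if `H(I) = I*`. -/
def AntiHomogIdeal {X : Type*} (I : Set (Set X)) : Prop := HF I = {A | Aᶜ ∈ I}

/-- `I ≅ J`: a bijection `f` of underlying sets with `A ∈ I ↔ f⁻¹[A] ∈ J`. -/
def Isomorphic {X Y : Type*} (I : Set (Set X)) (J : Set (Set Y)) : Prop :=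
  ∃ f : Y → X, Function.Bijective f ∧ ∀ A : Set X, A ∈ I ↔ f ⁻¹' A ∈ J

/-- The ideal `Fin ⊕ P(ω)` on `{0,1} × ω` (here `Bool × ℕ`, `true` playing the
role of `1`): all sets `A` with `{n : (1,n) ∈ A}` finite. -/
def FinOplusAll : Set (Set (Bool × ℕ)) := {A | {n : ℕ | (true, n) ∈ A}.Finite}

/-- An ideal on `ω` is admissible if it is not isomorphic to `Fin ⊕ P(ω)`. -/
def Admissible (I : Set (Set ℕ)) : Prop := ¬ Isomorphic I FinOplusAll

/-- An injection `f` is bi-`I`-invariant if `f[A] ∈ I ↔ A ∈ I` for all `A`. -/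
def BiInvariant {X : Type*} (I : Set (Set X)) (f : X → X) : Prop :=
  Function.Injective f ∧ ∀ A : Set X, f '' A ∈ I ↔ A ∈ I

/-- The set of fixed points of `f`. -/
def fixedSet {X : Type*} (f : X → X) : Set X := {x | f x = x}

/-- `I` is a maximal ideal. -/
def MaximalIdeal {X : Type*} (I : Set (Set X)) : Prop :=
  IsIdeal I ∧ ∀ A : Set X, A ∈ I ∨ Aᶜ ∈ I

/-- The set `D = {(i,j) ∈ ω² : i ≥ j}`. -/
abbrev DSet : Type := {p : ℕ × ℕ // p.2 ≤ p.1}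

/-- The ideal `ED_fin` on `D`: sets whose columns have uniformly bounded size. -/
def EDfin : Set (Set DSet) :=
  {A | ∃ m : ℕ, ∀ k : ℕ, {p : DSet | p ∈ A ∧ (p : ℕ × ℕ).1 = k}.ncard ≤ m}

/-! A set `A ∉ ED_fin` has columns of unbounded size. Proceed in rounds: each round takes the least
unused column of `D` and the least unused column of `A`, and adds one fresh column of `A` so large
that a fresh column of `D` makes the two pairs equinumerous. A bijection `D → A` respecting these
blocks sends every column into at most two columns and pulls every column back into at most two
columns, so it preserves uniform boundedness of column sizes in both directions. -/

open Function

def colBounded {X : Type*} (col : X → ℕ) : Set (Set X) :=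
  {A | ∃ m, ∀ k, (A ∩ col ⁻¹' {k}).ncard ≤ m}

theorem isIdeal_colBounded {X : Type*} {col : X → ℕ} (hfin : ∀ k, (col ⁻¹' {k}).Finite)
    (hunb : ∀ m, ∃ k, m < (col ⁻¹' {k}).ncard) : IsIdeal (colBounded col) := by
  refine ⟨?_, ?_, ?_, ?_⟩
  · rintro A B ⟨m, hm⟩ hBA
    exact ⟨m, fun k => (ncard_le_ncard (inter_subset_inter_left _ hBA)
      ((hfin k).subset inter_subset_right)).trans (hm k)⟩
  · rintro A B ⟨m, hm⟩ ⟨m', hm'⟩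
    refine ⟨m + m', fun k => ?_⟩
    rw [union_inter_distrib_right]
    exact (ncard_union_le _ _).trans (add_le_add (hm k) (hm' k))
  · exact fun A hA => ⟨A.ncard, fun k => ncard_le_ncard inter_subset_left hA⟩
  · rintro ⟨m, hm⟩
    obtain ⟨k, hk⟩ := hunb m
    exact (hm k).not_gt (by rwa [univ_inter])

section ColBounded

variable {X ι : Type*} {col : X → ι}

theorem preimage_comp_eq_biUnion {κ : Type*} {β : ι → κ} {r : κ} {N : Set ι}
    (hN : β ⁻¹' {r} = N) : (β ∘ col) ⁻¹' {r} = ⋃ n ∈ N, col ⁻¹' {n} := by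
  rw [preimage_comp, hN, biUnion_preimage_singleton]

variable {β : ι → ℕ} {r : ℕ} {N : Finset ι}

theorem finite_preimage_comp (hfin : ∀ n, (col ⁻¹' {n}).Finite) (hN : β ⁻¹' {r} = N) :
    ((β ∘ col) ⁻¹' {r}).Finite := by
  rw [preimage_comp_eq_biUnion hN]
  exact N.finite_toSet.biUnion fun n _ => hfin n

theorem ncard_preimage_comp (hfin : ∀ n, (col ⁻¹' {n}).Finite) (hN : β ⁻¹' {r} = N) :
    ((β ∘ col) ⁻¹' {r}).ncard = ∑ n ∈ N, (col ⁻¹' {n}).ncard := by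
  rw [preimage_comp_eq_biUnion hN, N.finite_toSet.ncard_biUnion (fun n _ => hfin n)
    (pairwiseDisjoint_fiber col _), finsum_mem_coe_finset]

end ColBounded

theorem colBounded_comp {X : Type*} {col : X → ℕ} {β : ℕ → ℕ} {M : ℕ}
    (hfin : ∀ k, (col ⁻¹' {k}).Finite)
    (hβ : ∀ r, ∃ N : Finset ℕ, β ⁻¹' {r} = N ∧ N.card ≤ M) :
    colBounded (β ∘ col) = colBounded col := by
  ext C
  constructor
  · rintro ⟨m, hm⟩
    refine ⟨m, fun k => (ncard_le_ncard ?_ ?_).trans (hm (β k))⟩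
    · exact inter_subset_inter_right _ fun p (hp : col p = k) => by simp [hp]
    · obtain ⟨N, hN, -⟩ := hβ (β k)
      exact (finite_preimage_comp hfin hN).subset inter_subset_right
  · rintro ⟨m, hm⟩
    refine ⟨M * m, fun r => ?_⟩
    obtain ⟨N, hN, hcard⟩ := hβ r
    calc (C ∩ (β ∘ col) ⁻¹' {r}).ncard = (⋃ n ∈ N, C ∩ col ⁻¹' {n}).ncard := by
          rw [preimage_comp_eq_biUnion hN, inter_iUnion₂, Finset.set_biUnion_coe]
      _ ≤ ∑ n ∈ N, (C ∩ col ⁻¹' {n}).ncard := N.set_ncard_biUnion_le _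
      _ ≤ N.card * m := Finset.sum_le_card_nsmul _ _ _ fun n _ => hm n
      _ ≤ M * m := Nat.mul_le_mul_right m hcard

theorem preimage_mem_colBounded_iff {X Y : Type*} {col : X → ℕ} {f : Y → X} (hf : Injective f)
    {C : Set X} (hC : C ⊆ range f) : f ⁻¹' C ∈ colBounded (col ∘ f) ↔ C ∈ colBounded col := by
  have hcol : ∀ k, (f ⁻¹' C ∩ (col ∘ f) ⁻¹' {k}).ncard = (C ∩ col ⁻¹' {k}).ncard := fun k => by
    rw [preimage_comp, ← preimage_inter,
      ncard_preimage_of_injective_subset_range hf (inter_subset_left.trans hC)]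
  simp only [colBounded, mem_ofPred_eq, hcol]

theorem exists_equiv_comp_eq {α β ι : Type*} {σ : α → ι} {τ : β → ι}
    (hσ : ∀ r, (σ ⁻¹' {r}).Finite) (hτ : ∀ r, (τ ⁻¹' {r}).Finite)
    (h : ∀ r, (σ ⁻¹' {r}).ncard = (τ ⁻¹' {r}).ncard) : ∃ e : α ≃ β, τ ∘ e = σ := by
  have e : ∀ r, σ ⁻¹' {r} ≃ τ ⁻¹' {r} := fun r => by
    have := (hσ r).to_subtype
    have := (hτ r).to_subtype
    exact (Finite.card_eq.mp (by rw [Nat.card_coe_set_eq, Nat.card_coe_set_eq, h r])).some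
  exact ⟨Equiv.ofFiberEquiv (f := σ) (g := τ) e, funext (Equiv.ofFiberEquiv_map e)⟩

section Homogeneity

variable {X : Type*} {I : Set (Set X)}

theorem HF_subset_of_univ_notMem (h : univ ∉ I) : HF I ⊆ {A | A ∉ I} := by
  rintro A ⟨f, hf, hiff⟩ hA
  obtain ⟨B, hB, hBeq⟩ := (hiff A subset_rfl).mp ⟨A, hA, (inter_self A).symm⟩
  have hpre : f ⁻¹' A = univ := eq_univ_of_forall fun p => hf.mapsTo (mem_univ p)
  rw [hpre, univ_inter, inter_univ] at hBeq
  exact h (hBeq ▸ hB)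

theorem mem_restr_iff (hI : ∀ A B, A ∈ I → B ⊆ A → B ∈ I) {A C : Set X} (hC : C ⊆ A) :
    C ∈ restr I A ↔ C ∈ I := by
  constructor
  · rintro ⟨B, hB, rfl⟩
    exact hI B _ hB inter_subset_left
  · exact fun hCI => ⟨C, hCI, (inter_eq_left.mpr hC).symm⟩

theorem mem_HF_iff (hI : ∀ A B, A ∈ I → B ⊆ A → B ∈ I) {A : Set X} :
    A ∈ HF I ↔ ∃ f : X → X, BijOn f univ A ∧ ∀ C ⊆ A, C ∈ I ↔ f ⁻¹' C ∈ I :=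
  exists_congr fun f => and_congr_right fun _ => forall₂_congr fun C hC => by
    rw [mem_restr_iff hI hC, mem_restr_iff hI (subset_univ _), univ_inter]

end Homogeneity

def DSet.fst (p : DSet) : ℕ := (p : ℕ × ℕ).1

theorem EDfin_eq_colBounded : EDfin = colBounded DSet.fst := rfl

def DSet.fiberFstEquiv (n : ℕ) : DSet.fst ⁻¹' {n} ≃ Fin (n + 1) where
  toFun p := ⟨(p : ℕ × ℕ).2, Nat.lt_succ_of_le ((p : DSet).2.trans_eq p.2)⟩
  invFun j := ⟨⟨(n, j), Nat.le_of_lt_succ j.2⟩, rfl⟩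
  left_inv := by rintro ⟨⟨⟨i, j⟩, hij⟩, rfl : i = n⟩; rfl
  right_inv _ := rfl

theorem DSet.finite_fst_preimage (n : ℕ) : (DSet.fst ⁻¹' {n}).Finite :=
  finite_coe_iff.mp (Finite.of_equiv _ (DSet.fiberFstEquiv n).symm)

theorem DSet.ncard_fst_preimage (n : ℕ) : (DSet.fst ⁻¹' {n}).ncard = n + 1 := by
  rw [← Nat.card_coe_set_eq, Nat.card_congr (DSet.fiberFstEquiv n), Nat.card_eq_fintype_card,
    Fintype.card_fin]

theorem isIdeal_EDfin : IsIdeal EDfin := by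
  rw [EDfin_eq_colBounded]
  exact isIdeal_colBounded DSet.finite_fst_preimage fun m =>
    ⟨m, by rw [DSet.ncard_fst_preimage]; omega⟩

section Rounds

theorem range_subset_of_insert_sInf_compl_subset {F : ℕ → Finset ℕ}
    (hF : ∀ r, insert (sInf (↑(F r))ᶜ) (F r) ⊆ F (r + 1)) (r : ℕ) : Finset.range r ⊆ F r := by
  induction r with
  | zero => simp
  | succ r ih =>
    intro k hk
    rcases Nat.lt_succ_iff_lt_or_eq.mp (Finset.mem_range.mp hk) with hkr | rfl
    · exact (Finset.subset_insert _ _).trans (hF r) (ih (Finset.mem_range.mpr hkr))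
    apply hF k
    by_cases hkF : k ∈ F k
    · exact Finset.mem_insert_of_mem hkF
    have hgap : sInf (↑(F k))ᶜ ∉ F k := Nat.sInf_mem (s := (↑(F k))ᶜ) ⟨k, hkF⟩
    have hgap_eq : sInf (↑(F k))ᶜ = k := le_antisymm (Nat.sInf_le hkF)
      (not_lt.mp fun hlt => hgap (ih (Finset.mem_range.mpr hlt)))
    rw [hgap_eq]
    exact Finset.mem_insert_self k _

theorem exists_preimage_singleton_eq_sdiff {F : ℕ → Finset ℕ} (h0 : F 0 = ∅)
    (hF : ∀ r, insert (sInf (↑(F r))ᶜ) (F r) ⊆ F (r + 1)) :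
    ∃ β : ℕ → ℕ, ∀ r, β ⁻¹' {r} = ↑(F (r + 1) \ F r) := by
  have hmono : Monotone F :=
    monotone_nat_of_le_succ fun r => (Finset.subset_insert _ _).trans (hF r)
  have hcov : ∀ n, ∃ r, n ∈ F (r + 1) := fun n =>
    ⟨n, range_subset_of_insert_sInf_compl_subset hF (n + 1) (Finset.self_mem_range_succ n)⟩
  refine ⟨fun n => Nat.find (hcov n), fun r => ?_⟩
  ext n
  simp only [mem_preimage, mem_singleton_iff, Finset.coe_sdiff, Set.mem_sdiff, Finset.mem_coe,
    Nat.find_eq_iff]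
  refine and_congr_right fun _ => ⟨fun hlt => ?_, fun hn r' hr' hr'n => hn (hmono hr' hr'n)⟩
  cases r with
  | zero => simp [h0]
  | succ r => exact hlt r r.lt_succ_self

theorem Finset.insert_insert_sdiff {α : Type*} [DecidableEq α] {U : Finset α} {i b : α}
    (hi : i ∉ U) (hb : b ∉ insert i U) : insert b (insert i U) \ U = {b, i} := by
  rw [insert_sdiff_of_notMem _ fun h => hb (mem_insert_of_mem h), insert_sdiff_of_notMem _ hi,
    Finset.sdiff_self, insert_empty]

theorem exists_round {a : ℕ → ℕ} (ha : ∀ m, ∃ k, m < a k) (U S : Finset ℕ) :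
    ∃ U' S' : Finset ℕ, insert (sInf (↑U)ᶜ) U ⊆ U' ∧ insert (sInf (↑S)ᶜ) S ⊆ S' ∧
      (U' \ U).card ≤ 2 ∧ (S' \ S).card ≤ 2 ∧ ∑ n ∈ S' \ S, (n + 1) = ∑ k ∈ U' \ U, a k := by
  set i := sInf (↑U : Set ℕ)ᶜ
  set s := sInf (↑S : Set ℕ)ᶜ
  have hi : i ∉ U := Nat.sInf_mem U.finite_toSet.infinite_compl.nonempty
  have hs : s ∉ S := Nat.sInf_mem S.finite_toSet.infinite_compl.nonempty
  obtain ⟨b, hb⟩ := ha ((insert i U).sup a + (insert s S).sup id + s + 2)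
  have hbU : b ∉ insert i U := fun hmem => by
    have := Finset.le_sup (f := a) hmem
    omega
  have hyS : a i + a b - (s + 2) ∉ insert s S := fun hmem => by
    have := Finset.le_sup (f := id) hmem
    simp only [id] at this
    omega
  refine ⟨insert b (insert i U), insert (a i + a b - (s + 2)) (insert s S),
    Finset.subset_insert _ _, Finset.subset_insert _ _, ?_⟩
  rw [Finset.insert_insert_sdiff hi hbU, Finset.insert_insert_sdiff hs hyS,
    Finset.sum_pair (ne_of_mem_of_not_mem (Finset.mem_insert_self _ _) hyS).symm,
    Finset.sum_pair (ne_of_mem_of_not_mem (Finset.mem_insert_self _ _) hbU).symm]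
  exact ⟨Finset.card_le_two, Finset.card_le_two, by omega⟩

theorem exists_blocks {a : ℕ → ℕ} (ha : ∀ m, ∃ k, m < a k) :
    ∃ γ β : ℕ → ℕ, ∀ r, ∃ K N : Finset ℕ, γ ⁻¹' {r} = K ∧ β ⁻¹' {r} = N ∧
      K.card ≤ 2 ∧ N.card ≤ 2 ∧ ∑ n ∈ N, (n + 1) = ∑ k ∈ K, a k := by
  choose U' S' hround using exists_round ha
  let F : ℕ → Finset ℕ × Finset ℕ := fun r => (fun US => (U' US.1 US.2, S' US.1 US.2))^[r] (∅, ∅)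
  have hF : ∀ r, F (r + 1) = (U' (F r).1 (F r).2, S' (F r).1 (F r).2) := fun r =>
    iterate_succ_apply' _ _ _
  obtain ⟨γ, hγ⟩ := exists_preimage_singleton_eq_sdiff (F := fun r => (F r).1) rfl fun r => by
    simp only [hF]
    exact (hround _ _).1
  obtain ⟨β, hβ⟩ := exists_preimage_singleton_eq_sdiff (F := fun r => (F r).2) rfl fun r => by
    simp only [hF]
    exact (hround _ _).2.1
  refine ⟨γ, β, fun r => ⟨_, _, hγ r, hβ r, ?_⟩⟩
  simp only [hF]
  exact (hround _ _).2.2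

end Rounds

theorem preimage_mem_colBounded_iff_of_blocks {X Y : Type*} {colX : X → ℕ} {colY : Y → ℕ}
    {f : Y → X} (hf : Injective f) {γ β : ℕ → ℕ} {M : ℕ}
    (hfinX : ∀ k, (colX ⁻¹' {k}).Finite) (hfinY : ∀ k, (colY ⁻¹' {k}).Finite)
    (hγ : ∀ r, ∃ K : Finset ℕ, γ ⁻¹' {r} = K ∧ K.card ≤ M)
    (hβ : ∀ r, ∃ N : Finset ℕ, β ⁻¹' {r} = N ∧ N.card ≤ M)
    (hcompat : γ ∘ colX ∘ f = β ∘ colY) {C : Set X} (hC : C ⊆ range f) :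
    f ⁻¹' C ∈ colBounded colY ↔ C ∈ colBounded colX := by
  rw [← colBounded_comp hfinY hβ, ← hcompat, ← colBounded_comp hfinX hγ]
  exact preimage_mem_colBounded_iff (col := γ ∘ colX) hf hC

theorem exists_bijOn_of_notMem_EDfin {A : Set DSet} (hA : A ∉ EDfin) :
    ∃ f : DSet → DSet, BijOn f univ A ∧ ∀ C ⊆ A, C ∈ EDfin ↔ f ⁻¹' C ∈ EDfin := by
  set a : ℕ → ℕ := fun k => (A ∩ DSet.fst ⁻¹' {k}).ncard
  have ha : ∀ m, ∃ k, m < a k := by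
    rw [EDfin_eq_colBounded] at hA
    simpa [colBounded] using hA
  obtain ⟨γ, β, hblocks⟩ := exists_blocks ha
  choose K N hK hN hKcard hNcard hsum using hblocks
  let colA : A → ℕ := DSet.fst ∘ Subtype.val
  have hfinA : ∀ k, (colA ⁻¹' {k}).Finite := fun k =>
    (DSet.finite_fst_preimage k).preimage (f := Subtype.val) Subtype.val_injective.injOn
  have hcardA : ∀ k, (colA ⁻¹' {k}).ncard = a k := fun k => by
    have h := ncard_preimage_of_injective_subset_range Subtype.val_injective
      (inter_subset_left.trans Subtype.range_coe.ge : A ∩ DSet.fst ⁻¹' {k} ⊆ range Subtype.val)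
    rwa [Subtype.preimage_coe_self_inter] at h
  obtain ⟨e, he⟩ := exists_equiv_comp_eq (σ := β ∘ DSet.fst) (τ := γ ∘ colA)
    (fun r => finite_preimage_comp DSet.finite_fst_preimage (hN r))
    (fun r => finite_preimage_comp hfinA (hK r))
    (fun r => by
      rw [ncard_preimage_comp DSet.finite_fst_preimage (hN r), ncard_preimage_comp hfinA (hK r)]
      simp only [DSet.ncard_fst_preimage, hcardA, hsum])
  have hinj : Injective (Subtype.val ∘ e) := Subtype.val_injective.comp e.injective
  have hrange : range (Subtype.val ∘ e) = A := by rw [EquivLike.range_comp, Subtype.range_coe]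
  refine ⟨Subtype.val ∘ e, ?_, fun C hC => ?_⟩
  · have hbij := (hinj.injOn (s := univ)).bijOn_image
    rwa [image_univ, hrange] at hbij
  · rw [EDfin_eq_colBounded]
    exact (preimage_mem_colBounded_iff_of_blocks hinj DSet.finite_fst_preimage
      DSet.finite_fst_preimage (fun r => ⟨K r, hK r, hKcard r⟩) (fun r => ⟨N r, hN r, hNcard r⟩)
      he (hC.trans hrange.ge)).symm

/-- `ED_fin` is a homogeneous ideal. -/
theorem stmt_3 : IsIdeal EDfin ∧ HomogIdeal EDfin :=
  ⟨isIdeal_EDfin, (HF_subset_of_univ_notMem isIdeal_EDfin.2.2.2).antisymm fun _ hA =>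
    (mem_HF_iff isIdeal_EDfin.1).mpr (exists_bijOn_of_notMem_EDfin hA)⟩
end

section
/- The Gallai ideal G₂ = {A ⊆ ω² : there exists k ∈ ω such that for every v ∈ ω² and every α ∈ ω∖{0}, the homothetic grid v + α·({1,2,…,k}×{1,2,…,k}) is not contained in A} is homogeneous. -/
/-
Gallai's theorem makes `G₂` closed under finite unions.

If `A ∈ G₂` then `A ∈ G₂|A`, so an isomorphism `G₂|A ≅ G₂` would put `ω²` into `G₂`. Conversely,
let `A ∉ G₂`, i.e. `A` contains homothetic grids of every size. Choose grids `Gₙ ⊆ A` of size `2ⁿ`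
inside squares `(bₙ, bₙ₊₁]²` with `bₙ` increasing, and map the `n`-th dyadic cell of `ω²` (a product
of two dyadic blocks) affinely into `Gₙ`. This injection is bi-invariant for `G₂`: a grid of
size `4k` has a subgrid of size `k` inside one cell, which is mapped onto a grid; and a grid in the
image lies in a single `Gₙ`, because points of different `Gₙ` share no coordinate, so it pulls
back to a grid. A Schröder–Bernstein argument turns it into a bijection `ω² → A` that agrees
pointwise with it or with the identity, hence is still bi-invariant, and `G₂|A ≅ G₂`.
-/

open Set Filter

/-- The Gallai ideal `G₂` on `ω²`. -/
def Gallai2 : Set (Set (ℕ × ℕ)) :=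
  {A | ∃ k : ℕ, ∀ v : ℕ × ℕ, ∀ α : ℕ, 0 < α →
    ¬ ((fun p : ℕ × ℕ => (v.1 + α * p.1, v.2 + α * p.2)) ''
        (Set.Icc 1 k ×ˢ Set.Icc 1 k) ⊆ A)}

open Function

section Ideal

variable {X : Type*} {I : Set (Set X)}

lemma restr_univ (I : Set (Set X)) : restr I univ = I := by
  simp [restr]

lemma mem_restr_iff_of_subset (hI : IsIdeal I) {A C : Set X} (hC : C ⊆ A) :
    C ∈ restr I A ↔ C ∈ I := by
  constructor
  · rintro ⟨B, hB, rfl⟩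
    exact hI.1 B _ hB inter_subset_left
  · exact fun h => ⟨C, h, (inter_eq_self_of_subset_left hC).symm⟩

lemma notMem_of_mem_HF (hI : univ ∉ I) {A : Set X} (hA : A ∈ HF I) : A ∉ I := by
  obtain ⟨f, hf, hfI⟩ := hA
  intro hAI
  have hpre : f ⁻¹' A = univ := eq_univ_of_forall fun x => hf.mapsTo trivial
  have := (hfI A subset_rfl).1 ⟨A, hAI, (inter_self A).symm⟩
  rw [hpre, inter_univ, restr_univ] at this
  exact hI this

lemma mem_HF_of_bijOn (hI : IsIdeal I) {A : Set X} {f : X → X} (hf : BijOn f univ A)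
    (hfI : ∀ D, f '' D ∈ I ↔ D ∈ I) : A ∈ HF I := by
  refine ⟨f, hf, fun C hC => ?_⟩
  rw [mem_restr_iff_of_subset hI hC, univ_inter, restr_univ, ← hfI (f ⁻¹' C),
    image_preimage_eq_of_subset (hC.trans hf.surjOn.subset_range)]

lemma image_mem_iff_of_forall_eq_or_eq (hI : IsIdeal I) {u f : X → X}
    (hu : ∀ D, u '' D ∈ I ↔ D ∈ I) (hf : ∀ x, f x = u x ∨ f x = x) (D : Set X) :
    f '' D ∈ I ↔ D ∈ I := by
  set Z := {x | f x = u x}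
  have hZ : f '' (D ∩ Z) = u '' (D ∩ Z) := image_congr fun x hx => hx.2
  have hZc : f '' (D \ Z) = D \ Z := by
    rw [image_congr fun x hx => (hf x).resolve_left hx.2, image_id']
  have hsplit : f '' D = u '' (D ∩ Z) ∪ D \ Z := by
    rw [← hZ, ← hZc, ← image_union, inter_union_sdiff]
  constructor
  · intro h
    have hDZ : D ∩ Z ∈ I := (hu _).1 (hI.1 _ _ h (hsplit ▸ subset_union_left))
    have hDZc : D \ Z ∈ I := hI.1 _ _ h (hsplit ▸ subset_union_right)
    simpa only [inter_union_sdiff] using hI.2.1 _ _ hDZ hDZc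
  · intro h
    rw [hsplit]
    exact hI.2.1 _ _ ((hu _).2 (hI.1 _ _ h inter_subset_left)) (hI.1 _ _ h sdiff_subset)

lemma exists_bijOn_forall_eq_or_eq {u : X → X} (hu : Injective u) {A : Set X}
    (huA : ∀ x, u x ∈ A) : ∃ f : X → X, BijOn f univ A ∧ ∀ x, f x = u x ∨ f x = x := by
  classical
  set Z := ⋃ n, u^[n] '' Aᶜ
  have hAZ : Aᶜ ⊆ Z := fun x hx => mem_iUnion.2 ⟨0, x, hx, rfl⟩
  have huZ : ∀ x ∈ Z, u x ∈ Z := by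
    intro x hx
    obtain ⟨n, y, hy, rfl⟩ := mem_iUnion.1 hx
    exact mem_iUnion.2 ⟨n + 1, y, hy, iterate_succ_apply' u n y⟩
  refine ⟨Z.piecewise u id, ⟨fun x _ => ?_, ?_, fun y hy => ?_⟩, fun x => ?_⟩
  · by_cases hx : x ∈ Z
    · rw [piecewise_eq_of_mem _ _ _ hx]; exact huA x
    · rw [piecewise_eq_of_notMem _ _ _ hx]; exact not_not.1 (mt (@hAZ x) hx)
  · refine ((injective_piecewise_iff Z).2 ⟨hu.injOn, injOn_id _, ?_⟩).injOn
    rintro x hx y hy rfl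
    exact hy (huZ x hx)
  · by_cases hyZ : y ∈ Z
    · obtain ⟨n, x, hx, rfl⟩ := mem_iUnion.1 hyZ
      cases n with
      | zero => exact absurd hy hx
      | succ n =>
        have hnZ : u^[n] x ∈ Z := mem_iUnion.2 ⟨n, x, hx, rfl⟩
        exact ⟨u^[n] x, trivial, by rw [piecewise_eq_of_mem _ _ _ hnZ, iterate_succ_apply']⟩
    · exact ⟨y, trivial, piecewise_eq_of_notMem _ _ _ hyZ⟩
  · by_cases hx : x ∈ Z
    · exact .inl (piecewise_eq_of_mem _ _ _ hx)
    · exact .inr (piecewise_eq_of_notMem _ _ _ hx)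

lemma mem_HF_of_biInvariant (hI : IsIdeal I) {u : X → X} (hu : BiInvariant I u) {A : Set X}
    (huA : ∀ x, u x ∈ A) : A ∈ HF I := by
  obtain ⟨f, hf, hfu⟩ := exists_bijOn_forall_eq_or_eq hu.1 huA
  exact mem_HF_of_bijOn hI hf (image_mem_iff_of_forall_eq_or_eq hI hu.2 hfu)

lemma homogIdeal_of_exists_biInvariant (hI : IsIdeal I)
    (h : ∀ A, A ∉ I → ∃ u : X → X, BiInvariant I u ∧ ∀ x, u x ∈ A) : HomogIdeal I := by
  ext A
  refine ⟨notMem_of_mem_HF hI.2.2.2, fun hA => ?_⟩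
  obtain ⟨u, hu, huA⟩ := h A hA
  exact mem_HF_of_biInvariant hI hu huA

end Ideal

namespace Gallai2

def gridPoint (v : ℕ × ℕ) (α : ℕ) (p : ℕ × ℕ) : ℕ × ℕ := (v.1 + α * p.1, v.2 + α * p.2)

def grid (v : ℕ × ℕ) (α k : ℕ) : Set (ℕ × ℕ) := gridPoint v α '' (Icc 1 k ×ˢ Icc 1 k)

def HasLargeGrids (A : Set (ℕ × ℕ)) : Prop := ∀ k, ∃ v α, 0 < α ∧ grid v α k ⊆ A

lemma mem_iff {A : Set (ℕ × ℕ)} : A ∈ Gallai2 ↔ ∃ k, ∀ v α, 0 < α → ¬ grid v α k ⊆ A :=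
  Iff.rfl

lemma notMem_iff {A : Set (ℕ × ℕ)} : A ∉ Gallai2 ↔ HasLargeGrids A := by
  simp [mem_iff, HasLargeGrids]

lemma gridPoint_mem_grid {v : ℕ × ℕ} {α k i j : ℕ} (hi : i ∈ Icc 1 k) (hj : j ∈ Icc 1 k) :
    gridPoint v α (i, j) ∈ grid v α k :=
  mem_image_of_mem _ ⟨hi, hj⟩

lemma grid_mono {v : ℕ × ℕ} {α k K : ℕ} (h : k ≤ K) : grid v α k ⊆ grid v α K :=
  image_mono (prod_mono (Icc_subset_Icc_right h) (Icc_subset_Icc_right h))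

lemma le_of_mem_grid {v p : ℕ × ℕ} {α k : ℕ} (hp : p ∈ grid v α k) :
    p.1 ≤ v.1 + α * k ∧ p.2 ≤ v.2 + α * k := by
  obtain ⟨⟨i, j⟩, ⟨⟨-, hi⟩, -, hj⟩, rfl⟩ := hp
  exact ⟨by dsimp only [gridPoint]; gcongr, by dsimp only [gridPoint]; gcongr⟩

lemma gridPoint_add (v : ℕ × ℕ) (α i j s t : ℕ) :
    gridPoint (gridPoint v α (i, j)) α (s, t) = gridPoint v α (i + s, j + t) := by
  simp only [gridPoint]
  ext <;> ring

lemma gridPoint_gridPoint (v w : ℕ × ℕ) (α β : ℕ) (p : ℕ × ℕ) :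
    gridPoint (gridPoint v α w) (α * β) p = gridPoint v α (w + β • p) := by
  simp only [gridPoint, Prod.fst_add, Prod.snd_add, Prod.smul_fst, Prod.smul_snd, smul_eq_mul]
  ext <;> ring

lemma setOf_fst_le_or_snd_le_mem (b : ℕ) : {p : ℕ × ℕ | p.1 ≤ b ∨ p.2 ≤ b} ∈ Gallai2 := by
  refine ⟨b + 1, fun v α hα h => ?_⟩
  have hb : b + 1 ≤ α * (b + 1) := Nat.le_mul_of_pos_left _ hα
  obtain hle | hle := h (gridPoint_mem_grid (v := v) (α := α) (i := b + 1) (j := b + 1)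
    ⟨le_add_self, le_rfl⟩ ⟨le_add_self, le_rfl⟩) <;>
  · dsimp only [gridPoint] at hle
    omega

lemma mem_of_subset {A B : Set (ℕ × ℕ)} (hA : A ∈ Gallai2) (hBA : B ⊆ A) : B ∈ Gallai2 :=
  let ⟨k, hk⟩ := hA
  ⟨k, fun v α hα h => hk v α hα (h.trans hBA)⟩

lemma mem_of_finite {A : Set (ℕ × ℕ)} (hA : A.Finite) : A ∈ Gallai2 := by
  obtain ⟨b, hb⟩ := hA.bddAbove
  exact mem_of_subset (setOf_fst_le_or_snd_le_mem b.1) fun p hp => .inl (hb hp).1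

lemma univ_notMem : univ ∉ Gallai2 := fun ⟨_, hk⟩ => hk (0, 0) 1 one_pos (subset_univ _)

open Combinatorics in
/-- Gallai's theorem for grids, deduced from Hales–Jewett by summing the coordinates of a point
of the cube `ι → [1,k]²`: a combinatorial line is sent to a homothetic copy of `[1,k]²`. -/
theorem exists_monochromatic_subgrid (κ : Type*) [Finite κ] (k : ℕ) :
    ∃ K, ∀ (C : ℕ × ℕ → κ) (v : ℕ × ℕ) (α : ℕ), 0 < α →
      ∃ w β c, 0 < β ∧ grid w β k ⊆ grid v α K ∧ ∀ p ∈ grid w β k, C p = c := by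
  classical
  set S : Set (ℕ × ℕ) := Icc 1 k ×ˢ Icc 1 k
  obtain ⟨ι, _, hι⟩ := Line.exists_mono_in_high_dimension S κ
  set e : (ι → S) → ℕ × ℕ := fun x => ∑ i, (x i : ℕ × ℕ)
  refine ⟨Fintype.card ι * k, fun C v α hα => ?_⟩
  obtain ⟨l, c, hl⟩ := hι fun x => C (gridPoint v α (e x))
  set s : Finset ι := {i | l.idxFun i = none}
  set b : ℕ × ℕ := ∑ i ∈ sᶜ, ((l.idxFun i).map Subtype.val).getD 0
  have hs : 0 < s.card :=
    Finset.card_pos.2 ⟨l.proper.choose, by simpa [s] using l.proper.choose_spec⟩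
  have he : ∀ x : S, e (l x) = b + s.card • (x : ℕ × ℕ) := by
    intro x
    rw [add_comm, ← Finset.sum_const]
    refine (Finset.sum_add_sum_compl s _).symm.trans ?_
    congr 1
    · refine Finset.sum_congr rfl fun i hi => ?_
      rw [l.apply_none _ _ (by simpa [s] using hi)]
    · refine Finset.sum_congr rfl fun i hi => ?_
      obtain ⟨y, hy⟩ := Option.ne_none_iff_exists.1 (by simpa [s] using hi)
      simp [← hy]
  have he_mem : ∀ x : S, e (l x) ∈ Icc 1 (Fintype.card ι * k) ×ˢ Icc 1 (Fintype.card ι * k) := by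
    intro x
    have hlo : Finset.univ.card • ((1, 1) : ℕ × ℕ) ≤ e (l x) :=
      Finset.card_nsmul_le_sum _ _ _ fun i _ => ⟨((l x i).2.1).1, ((l x i).2.2).1⟩
    have hhi : e (l x) ≤ Finset.univ.card • ((k, k) : ℕ × ℕ) :=
      Finset.sum_le_card_nsmul _ _ _ fun i _ => ⟨((l x i).2.1).2, ((l x i).2.2).2⟩
    have hn : 0 < Fintype.card ι := Fintype.card_pos_iff.2 ⟨l.proper.choose⟩
    simp only [Finset.card_univ, Prod.le_def, Prod.smul_fst, Prod.smul_snd, smul_eq_mul] at hlo hhi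
    exact ⟨⟨by omega, hhi.1⟩, ⟨by omega, hhi.2⟩⟩
  refine ⟨gridPoint v α b, α * s.card, c, Nat.mul_pos hα hs, ?_, ?_⟩
  · rintro _ ⟨p, hp, rfl⟩
    rw [gridPoint_gridPoint, ← he ⟨p, hp⟩]
    exact mem_image_of_mem _ (he_mem _)
  · rintro _ ⟨p, hp, rfl⟩
    rw [gridPoint_gridPoint, ← he ⟨p, hp⟩]
    exact hl _

lemma union_mem {A B : Set (ℕ × ℕ)} (hA : A ∈ Gallai2) (hB : B ∈ Gallai2) : A ∪ B ∈ Gallai2 := by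
  classical
  obtain ⟨k₁, hk₁⟩ := mem_iff.1 hA
  obtain ⟨k₂, hk₂⟩ := mem_iff.1 hB
  obtain ⟨K, hK⟩ := exists_monochromatic_subgrid Bool (max k₁ k₂)
  refine ⟨K, fun v α hα hsub => ?_⟩
  obtain ⟨w, β, c, hβ, hwv, hc⟩ := hK (fun p => decide (p ∈ A)) v α hα
  cases c
  · refine hk₂ w β hβ fun p hp => ?_
    have hp' := grid_mono (le_max_right k₁ k₂) hp
    exact (hsub (hwv hp')).resolve_left (by simpa using hc p hp')
  · refine hk₁ w β hβ fun p hp => ?_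
    simpa using hc p (grid_mono (le_max_left k₁ k₂) hp)

lemma isIdeal : IsIdeal Gallai2 :=
  ⟨fun _ _ hA hBA => mem_of_subset hA hBA, fun _ _ => union_mem, fun _ => mem_of_finite,
    univ_notMem⟩

lemma HasLargeGrids.exists_far_grid {A : Set (ℕ × ℕ)} (hA : HasLargeGrids A) (b k : ℕ) :
    ∃ v α, 0 < α ∧ grid v α k ⊆ A ∧ ∀ p ∈ grid v α k, b < p.1 ∧ b < p.2 := by
  set T := {p : ℕ × ℕ | p.1 ≤ b ∨ p.2 ≤ b}
  have hAT : HasLargeGrids (A \ T) := notMem_iff.1 fun h => notMem_iff.2 hA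
    (mem_of_subset (union_mem h (setOf_fst_le_or_snd_le_mem b)) (subset_sdiff_union A T))
  obtain ⟨v, α, hα, h⟩ := hAT k
  refine ⟨v, α, hα, fun p hp => (h hp).1, fun p hp => ?_⟩
  have : ¬(p.1 ≤ b ∨ p.2 ≤ b) := (h hp).2
  omega

/-- The index `a` of the dyadic block `[2 ^ a - 1, 2 ^ (a + 1) - 2]` containing `x`; `offset x`
is the position of `x` in it, counted from `1`. -/
def level (x : ℕ) : ℕ := Nat.log 2 (x + 1)

def offset (x : ℕ) : ℕ := x + 2 - 2 ^ level x

lemma level_mono : Monotone level := fun _ _ h => Nat.log_mono_right (by omega)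

lemma pow_level_le (x : ℕ) : 2 ^ level x ≤ x + 1 := Nat.pow_log_le_self 2 (by omega)

lemma offset_add_pow_level (x : ℕ) : offset x + 2 ^ level x = x + 2 := by
  have := pow_level_le x
  unfold offset
  omega

lemma offset_mem_Icc (x : ℕ) : offset x ∈ Icc 1 (2 ^ level x) := by
  have h1 := pow_level_le x
  have h2 : x + 1 < 2 ^ level x * 2 := pow_succ 2 (level x) ▸ Nat.lt_pow_succ_log_self one_lt_two _
  unfold offset
  constructor <;> omega

lemma level_le_succ_of_le_two_mul {x y : ℕ} (h : y + 1 ≤ 2 * (x + 1)) :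
    level y ≤ level x + 1 :=
  calc Nat.log 2 (y + 1) ≤ Nat.log 2 ((x + 1) * 2) := Nat.log_mono_right (by omega)
    _ = level x + 1 := Nat.log_mul_base one_lt_two (by omega)

lemma Monotone.exists_const_run_of_le_succ {f : ℕ → ℕ} (hf : Monotone f) (i k : ℕ)
    (h : f (i + 2 * k) ≤ f i + 1) :
    ∃ i₀, i ≤ i₀ ∧ i₀ + k ≤ i + 2 * k ∧ ∀ s ≤ k, f (i₀ + s) = f i₀ := by
  by_cases hk : f (i + k) = f i
  · refine ⟨i, le_rfl, by omega, fun s hs => le_antisymm ?_ (hf (by omega))⟩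
    exact hk ▸ hf (by omega)
  · refine ⟨i + k, by omega, by omega, fun s hs => le_antisymm ?_ (hf (by omega))⟩
    have h1 : f i ≤ f (i + k) := hf (by omega)
    have h2 : f (i + k + s) ≤ f (i + 2 * k) := hf (by omega)
    omega

lemma exists_run_level_eq (v α k : ℕ) :
    ∃ i₀, i₀ + k ≤ 4 * k ∧ ∀ s ≤ k, level (v + α * (i₀ + s)) = level (v + α * i₀) := by
  have hf : Monotone fun i => level (v + α * i) := fun i j h => level_mono (by gcongr)
  have hdouble : α * (2 * k + 2 * k) = 2 * (α * (2 * k)) := by ring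
  obtain ⟨i₀, -, hi₀, h⟩ := Monotone.exists_const_run_of_le_succ hf (2 * k) k
    (level_le_succ_of_le_two_mul (by omega))
  exact ⟨i₀, by omega, h⟩

def cell (p : ℕ × ℕ) : ℕ := Nat.pair (level p.1) (level p.2)

lemma exists_subgrid_cell_eq (v : ℕ × ℕ) (α k : ℕ) :
    ∃ w, grid w α k ⊆ grid v α (4 * k) ∧ ∃ c, ∀ p ∈ grid w α k, cell p = c := by
  obtain ⟨i₀, hi₀, hi⟩ := exists_run_level_eq v.1 α k
  obtain ⟨j₀, hj₀, hj⟩ := exists_run_level_eq v.2 α k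
  refine ⟨gridPoint v α (i₀, j₀), ?_, cell (gridPoint v α (i₀, j₀)), ?_⟩ <;>
    rintro _ ⟨⟨s, t⟩, ⟨⟨hs, hs'⟩, ht, ht'⟩, rfl⟩ <;> rw [gridPoint_add]
  · exact gridPoint_mem_grid ⟨by omega, by omega⟩ ⟨by omega, by omega⟩
  · exact congrArg₂ Nat.pair (hi s hs') (hj t ht')

/-- The squares `(bound n, bound (n + 1)]²` are disjoint and stacked diagonally, so points of
different grids share no coordinate. -/
structure GridSequence (A : Set (ℕ × ℕ)) where
  corner : ℕ → ℕ × ℕ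
  step : ℕ → ℕ
  bound : ℕ → ℕ
  step_pos : ∀ n, 0 < step n
  grid_subset : ∀ n, grid (corner n) (step n) (2 ^ n) ⊆ A
  bound_mono : Monotone bound
  mem_Ioc : ∀ n, ∀ p ∈ grid (corner n) (step n) (2 ^ n),
    p.1 ∈ Ioc (bound n) (bound (n + 1)) ∧ p.2 ∈ Ioc (bound n) (bound (n + 1))

lemma HasLargeGrids.nonempty_gridSequence {A : Set (ℕ × ℕ)} (hA : HasLargeGrids A) :
    Nonempty (GridSequence A) := by
  choose v α hα hvA hvb using hA.exists_far_grid
  let bound : ℕ → ℕ := fun n => Nat.rec 0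
    (fun n b => b + (v b (2 ^ n)).1 + (v b (2 ^ n)).2 + α b (2 ^ n) * 2 ^ n) n
  have hbound : ∀ n, bound (n + 1) = bound n + (v (bound n) (2 ^ n)).1 +
      (v (bound n) (2 ^ n)).2 + α (bound n) (2 ^ n) * 2 ^ n := fun n => rfl
  refine ⟨⟨fun n => v (bound n) (2 ^ n), fun n => α (bound n) (2 ^ n), bound,
    fun n => hα _ _, fun n => hvA _ _, monotone_nat_of_le_succ fun n => ?_, fun n p hp => ?_⟩⟩
  · rw [hbound]
    omega
  · have hlo := hvb _ _ p hp
    have hhi := le_of_mem_grid hp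
    simp only [mem_Ioc, hbound]
    omega

namespace GridSequence

variable {A : Set (ℕ × ℕ)} (S : GridSequence A)

def block (n : ℕ) : Set (ℕ × ℕ) := grid (S.corner n) (S.step n) (2 ^ n)

def embed (p : ℕ × ℕ) : ℕ × ℕ :=
  gridPoint (S.corner (cell p)) (S.step (cell p)) (offset p.1, offset p.2)

lemma embed_mem_block (p : ℕ × ℕ) : S.embed p ∈ S.block (cell p) := by
  have h1 : 2 ^ level p.1 ≤ 2 ^ cell p := Nat.pow_le_pow_right two_pos (Nat.left_le_pair _ _)
  have h2 : 2 ^ level p.2 ≤ 2 ^ cell p := Nat.pow_le_pow_right two_pos (Nat.right_le_pair _ _)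
  exact gridPoint_mem_grid (Icc_subset_Icc_right h1 (offset_mem_Icc _))
    (Icc_subset_Icc_right h2 (offset_mem_Icc _))

lemma embed_mem (p : ℕ × ℕ) : S.embed p ∈ A := S.grid_subset _ (S.embed_mem_block p)

lemma eq_of_mem_block_of_fst_eq {p q : ℕ × ℕ} {n m : ℕ} (hp : p ∈ S.block n)
    (hq : q ∈ S.block m) (h : p.1 = q.1) : n = m := by
  by_contra hnm
  exact disjoint_left.1 (S.bound_mono.pairwise_disjoint_on_Ioc_succ hnm)
    (by simpa using (S.mem_Ioc n p hp).1) (by simpa [h] using (S.mem_Ioc m q hq).1)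

lemma eq_of_mem_block_of_snd_eq {p q : ℕ × ℕ} {n m : ℕ} (hp : p ∈ S.block n)
    (hq : q ∈ S.block m) (h : p.2 = q.2) : n = m := by
  by_contra hnm
  exact disjoint_left.1 (S.bound_mono.pairwise_disjoint_on_Ioc_succ hnm)
    (by simpa using (S.mem_Ioc n p hp).2) (by simpa [h] using (S.mem_Ioc m q hq).2)

lemma cell_eq_of_embed_fst_eq {p q : ℕ × ℕ} (h : (S.embed p).1 = (S.embed q).1) :
    cell p = cell q :=
  S.eq_of_mem_block_of_fst_eq (S.embed_mem_block p) (S.embed_mem_block q) h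

lemma cell_eq_of_embed_snd_eq {p q : ℕ × ℕ} (h : (S.embed p).2 = (S.embed q).2) :
    cell p = cell q :=
  S.eq_of_mem_block_of_snd_eq (S.embed_mem_block p) (S.embed_mem_block q) h

lemma embed_sub_embed {p q : ℕ × ℕ} (h : cell p = cell q) :
    ((S.embed q).1 : ℤ) - (S.embed p).1 = S.step (cell p) * ((q.1 : ℤ) - p.1) ∧
      ((S.embed q).2 : ℤ) - (S.embed p).2 = S.step (cell p) * ((q.2 : ℤ) - p.2) := by
  obtain ⟨h1, h2⟩ := Nat.pair_eq_pair.1 h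
  have hp1 := offset_add_pow_level p.1
  have hp2 := offset_add_pow_level p.2
  have hq1 := offset_add_pow_level q.1
  have hq2 := offset_add_pow_level q.2
  rw [h1] at hp1
  rw [h2] at hp2
  zify at hp1 hp2 hq1 hq2
  simp only [embed, gridPoint, ← h]
  push_cast
  constructor
  · linear_combination (S.step (cell p) : ℤ) * (hq1 - hp1)
  · linear_combination (S.step (cell p) : ℤ) * (hq2 - hp2)

lemma embed_injective : Injective S.embed := by
  intro p q h
  obtain ⟨h1, h2⟩ := S.embed_sub_embed (S.cell_eq_of_embed_fst_eq (congrArg Prod.fst h))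
  rw [h, sub_self, eq_comm, mul_eq_zero] at h1 h2
  have hσ : (S.step (cell p) : ℤ) ≠ 0 := by exact_mod_cast (S.step_pos _).ne'
  have := h1.resolve_left hσ
  have := h2.resolve_left hσ
  ext <;> omega

lemma embed_gridPoint {p : ℕ × ℕ} {β d e : ℕ} (hc : cell p = cell (gridPoint p β (d, e))) :
    S.embed (gridPoint p β (d, e)) = gridPoint (S.embed p) (S.step (cell p) * β) (d, e) := by
  obtain ⟨h1, h2⟩ := S.embed_sub_embed hc
  simp only [gridPoint] at h1 h2 ⊢
  ext <;> zify <;> push_cast at h1 h2 ⊢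
  · linear_combination h1
  · linear_combination h2

lemma eq_gridPoint_of_embed_eq {p q : ℕ × ℕ} {β d e : ℕ} (hc : cell p = cell q)
    (hq : S.embed q = gridPoint (S.embed p) (S.step (cell p) * β) (d, e)) :
    q = gridPoint p β (d, e) := by
  obtain ⟨h1, h2⟩ := S.embed_sub_embed hc
  rw [hq] at h1 h2
  simp only [gridPoint] at h1 h2 ⊢
  push_cast at h1 h2
  have hσ : (S.step (cell p) : ℤ) ≠ 0 := by exact_mod_cast (S.step_pos _).ne'
  have e1 := mul_left_cancel₀ hσ (h1.symm.trans (by ring) : _ = (S.step (cell p) : ℤ) * (β * d))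
  have e2 := mul_left_cancel₀ hσ (h2.symm.trans (by ring) : _ = (S.step (cell p) : ℤ) * (β * e))
  ext <;> zify <;> linarith

lemma hasLargeGrids_image {D : Set (ℕ × ℕ)} (hD : HasLargeGrids D) :
    HasLargeGrids (S.embed '' D) := by
  intro k
  obtain ⟨v, α, hα, hvD⟩ := hD (4 * (k + 1))
  obtain ⟨w, hwv, c, hc⟩ := exists_subgrid_cell_eq v α (k + 1)
  set p₀ := gridPoint w α (1, 1)
  have hp₀ : p₀ ∈ grid w α (k + 1) := gridPoint_mem_grid ⟨le_rfl, by omega⟩ ⟨le_rfl, by omega⟩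
  refine ⟨S.embed p₀, S.step (cell p₀) * α, Nat.mul_pos (S.step_pos _) hα, ?_⟩
  rintro _ ⟨⟨d, e⟩, ⟨⟨hd, hd'⟩, he, he'⟩, rfl⟩
  have hq : gridPoint p₀ α (d, e) ∈ grid w α (k + 1) := by
    rw [gridPoint_add]
    exact gridPoint_mem_grid ⟨by omega, by omega⟩ ⟨by omega, by omega⟩
  exact ⟨_, hvD (hwv hq), S.embed_gridPoint ((hc _ hp₀).trans (hc _ hq).symm)⟩

lemma hasLargeGrids_of_image {D : Set (ℕ × ℕ)} (hD : HasLargeGrids (S.embed '' D)) :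
    HasLargeGrids D := by
  intro k
  obtain ⟨w, γ, hγ, hwD⟩ := hD (k + 2)
  have pre : ∀ s t, s ∈ Icc 1 (k + 2) → t ∈ Icc 1 (k + 2) →
      ∃ x ∈ D, S.embed x = gridPoint w γ (s, t) :=
    fun s t hs ht => hwD (gridPoint_mem_grid hs ht)
  obtain ⟨x₀, hx₀D, hx₀⟩ := pre 1 1 ⟨le_rfl, by omega⟩ ⟨le_rfl, by omega⟩
  -- `gridPoint w γ (s, 1)` shares a column with `gridPoint w γ (s, t)` and a row with `(1, 1)`
  have hcell : ∀ s t x, s ∈ Icc 1 (k + 2) → t ∈ Icc 1 (k + 2) →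
      S.embed x = gridPoint w γ (s, t) → cell x₀ = cell x := by
    intro s t x hs ht hx
    obtain ⟨y, -, hy⟩ := pre s 1 hs ⟨le_rfl, by omega⟩
    exact (S.cell_eq_of_embed_snd_eq (p := x₀) (q := y) (by rw [hx₀, hy]; rfl)).trans
      (S.cell_eq_of_embed_fst_eq (p := y) (q := x) (by rw [hx, hy]; rfl))
  obtain ⟨g, hg⟩ : S.step (cell x₀) ∣ γ := by
    obtain ⟨x₁, -, hx₁⟩ := pre 2 1 ⟨by omega, by omega⟩ ⟨le_rfl, by omega⟩
    have h := (S.embed_sub_embed (hcell 2 1 x₁ ⟨by omega, by omega⟩ ⟨le_rfl, by omega⟩ hx₁)).1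
    rw [hx₁, hx₀] at h
    simp only [gridPoint] at h
    push_cast at h
    exact Int.natCast_dvd_natCast.1 ⟨(x₁.1 : ℤ) - x₀.1, by linear_combination h⟩
  refine ⟨x₀, g, Nat.pos_of_ne_zero fun hg₀ => by simp [hg₀] at hg; omega, ?_⟩
  rintro _ ⟨⟨d, e⟩, ⟨⟨hd, hd'⟩, he, he'⟩, rfl⟩
  obtain ⟨x, hxD, hx⟩ := pre (1 + d) (1 + e) ⟨by omega, by omega⟩ ⟨by omega, by omega⟩
  refine S.eq_gridPoint_of_embed_eq (hcell _ _ x ⟨by omega, by omega⟩ ⟨by omega, by omega⟩ hx)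
    ?_ ▸ hxD
  rw [hx, hx₀, ← hg, gridPoint_add]

lemma biInvariant_embed : BiInvariant Gallai2 S.embed := by
  refine ⟨S.embed_injective, fun D => ?_⟩
  rw [← not_iff_not, notMem_iff, notMem_iff]
  exact ⟨S.hasLargeGrids_of_image, S.hasLargeGrids_image⟩

end GridSequence

lemma homogIdeal : HomogIdeal Gallai2 :=
  homogIdeal_of_exists_biInvariant isIdeal fun _ hA =>
    let S := (notMem_iff.1 hA).nonempty_gridSequence.some
    ⟨S.embed, S.biInvariant_embed, S.embed_mem⟩

end Gallai2

/-- the Gallai ideal `G₂` is a homogeneous ideal. -/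
theorem stmt_6 : IsIdeal Gallai2 ∧ HomogIdeal Gallai2 := ⟨Gallai2.isIdeal, Gallai2.homogIdeal⟩
end

section
/- If I and J are homogeneous ideals on ω, then their product I ⊗ J, the ideal on ω×ω defined by A ∈ I⊗J if and only if {x ∈ ω : A_x ∉ J} ∈ I, where A_x = {y ∈ ω : (x,y) ∈ A}, is homogeneous. -/
open Set Filter

/-- The Fubini product `I ⊗ J`. -/
def prodIdeal (I J : Set (Set ℕ)) : Set (Set (ℕ × ℕ)) :=
  {A | {x : ℕ | {y : ℕ | (x, y) ∈ A} ∉ J} ∈ I}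

/-!
Let `A ∉ I ⊗ J` and let `S = {x : A_x ∉ J}`, so `S ∉ I`. Homogeneity of `I` gives an
`I`-isomorphism `g : ω → S`, and homogeneity of `J` gives a `J`-isomorphism from `ω` onto each
column `A_x` with `x ∈ S`. The columns outside `S` are `J`-small; fold each of them onto its own
column in `S`. A `J`-small set can be absorbed into a `J`-positive column without changing the
`J`-structure: if `J` has an infinite member `E`, rearrange `E` alone; otherwise `J` is the ideal
of finite sets and any bijection works. Gluing the column bijections along `g` gives
`(I ⊗ J)|A ≅ I ⊗ J`.
-/

open Function

namespace IsIdeal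

variable {X : Type*} {K : Set (Set X)}

lemma mono (hK : IsIdeal K) {A B : Set X} (hA : A ∈ K) (hBA : B ⊆ A) : B ∈ K :=
  hK.1 A B hA hBA

lemma union_mem (hK : IsIdeal K) {A B : Set X} (hA : A ∈ K) (hB : B ∈ K) : A ∪ B ∈ K :=
  hK.2.1 A B hA hB

lemma finite_mem (hK : IsIdeal K) {A : Set X} (hA : A.Finite) : A ∈ K :=
  hK.2.2.1 A hA

lemma univ_notMem (hK : IsIdeal K) : (univ : Set X) ∉ K :=
  hK.2.2.2

lemma infinite_of_notMem (hK : IsIdeal K) {A : Set X} (hA : A ∉ K) : A.Infinite :=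
  fun h => hA (hK.finite_mem h)

lemma mem_iff_of_sdiff_eq (hK : IsIdeal K) {E s t : Set X} (hE : E ∈ K) (h : s \ E = t \ E) :
    s ∈ K ↔ t ∈ K := by
  have key : ∀ {a b : Set X}, a \ E = b \ E → a ∈ K → b ∈ K := fun h ha => by
    refine hK.mono (hK.union_mem (hK.mono ha (sdiff_subset (t := E))) hE) ?_
    rw [h]
    exact subset_sdiff_union _ E
  exact ⟨key h, key h.symm⟩

lemma mem_restr_iff (hK : IsIdeal K) {C D : Set X} : C ∈ restr K D ↔ C ∈ K ∧ C ⊆ D := by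
  constructor
  · rintro ⟨B, hB, rfl⟩
    exact ⟨hK.mono hB inter_subset_left, inter_subset_right⟩
  · rintro ⟨hC, hCD⟩
    exact ⟨C, hC, (inter_eq_left.2 hCD).symm⟩

lemma mem_HF_iff (hK : IsIdeal K) {A : Set X} :
    A ∈ HF K ↔ ∃ f : X → X, BijOn f univ A ∧ ∀ C ⊆ A, (C ∈ K ↔ f ⁻¹' C ∈ K) := by
  refine exists_congr fun f => and_congr_right fun _ => forall₂_congr fun C hCA => ?_
  rw [hK.mem_restr_iff, hK.mem_restr_iff, univ_inter, and_iff_left hCA,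
    and_iff_left (subset_univ _)]

lemma notMem_of_mem_HF (hK : IsIdeal K) {A : Set X} (hA : A ∈ HF K) : A ∉ K := by
  obtain ⟨f, hf, hfK⟩ := hK.mem_HF_iff.1 hA
  intro hAK
  have hfA : f ⁻¹' A = univ := eq_univ_of_forall fun p => hf.mapsTo (mem_univ p)
  exact hK.univ_notMem (hfA ▸ (hfK A subset_rfl).1 hAK)

lemma homogIdeal_iff (hK : IsIdeal K) : HomogIdeal K ↔ ∀ A, A ∉ K → A ∈ HF K :=
  ⟨fun h _ hA => h ▸ hA, fun h => Subset.antisymm (fun _ => hK.notMem_of_mem_HF) h⟩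

lemma exists_bijOn_of_homogIdeal (hK : IsIdeal K) (hKh : HomogIdeal K) {A : Set X}
    (hA : A ∉ K) : ∃ f : X → X, BijOn f univ A ∧ ∀ C ⊆ A, (C ∈ K ↔ f ⁻¹' C ∈ K) :=
  hK.mem_HF_iff.1 (hKh ▸ hA)

lemma prodIdeal {I J : Set (Set ℕ)} (hI : IsIdeal I) (hJ : IsIdeal J) :
    IsIdeal (prodIdeal I J) := by
  refine ⟨fun A B hA hBA => ?_, fun A B hA hB => ?_, fun A hA => ?_, fun h => ?_⟩
  · exact hI.mono hA fun x hBx hAx => hBx (hJ.mono hAx (preimage_mono hBA))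
  · exact hI.mono (hI.union_mem hA hB) fun x hx =>
      not_and_or.1 fun h => hx (hJ.union_mem h.1 h.2)
  · exact hI.mono (hI.finite_mem finite_empty) fun x hx =>
      hx (hJ.finite_mem (hA.preimage (Prod.mk_right_injective x).injOn))
  · exact hI.univ_notMem (hI.mono h fun x _ => hJ.univ_notMem)

end IsIdeal

lemma exists_bijOn_of_countable_of_infinite {α β : Type*} {s : Set α} {t : Set β}
    (hs : s.Countable) (hsi : s.Infinite) (ht : t.Countable) (hti : t.Infinite) :
    ∃ f : α → β, BijOn f s t := by
  classical
  have := hs.to_subtype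
  have := ht.to_subtype
  have := hsi.to_subtype
  have := hti.to_subtype
  obtain ⟨e⟩ := nonempty_equiv_of_countable (α := s) (β := t)
  obtain ⟨b, -⟩ := hti.nonempty
  refine ⟨fun a => if h : a ∈ s then e ⟨a, h⟩ else b, fun a ha => by simp [ha],
    fun a ha a' ha' h => ?_, fun c hc => ⟨e.symm ⟨c, hc⟩, (e.symm ⟨c, hc⟩).2, by simp⟩⟩
  simp only [ha, ha', dite_true] at h
  exact congrArg Subtype.val (e.injective (Subtype.ext h))

lemma bijOn_uncurry_of_bijOn_fibers {ι κ α γ : Type*} {π : α → γ} {A : Set α} {S : Set γ}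
    {g : ι → γ} (hg : BijOn g univ S) (hπ : MapsTo π A S) {β : ι → κ → α}
    (hβ : ∀ i, BijOn (β i) univ (A ∩ π ⁻¹' {g i})) : BijOn (uncurry β) univ A := by
  refine ⟨fun p _ => ((hβ p.1).mapsTo (mem_univ p.2)).1, ?_, fun a ha => ?_⟩
  · rintro ⟨i, k⟩ - ⟨i', k'⟩ - h
    have hi : g i = g i' := by
      have h₁ : π (β i k) = g i := ((hβ i).mapsTo (mem_univ k)).2
      have h₂ : π (β i' k') = g i' := ((hβ i').mapsTo (mem_univ k')).2
      rw [← h₁, ← h₂]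
      exact congrArg π h
    obtain rfl := hg.injOn (mem_univ i) (mem_univ i') hi
    rw [(hβ i).injOn (mem_univ k) (mem_univ k') h]
  · obtain ⟨i, -, hi⟩ := hg.surjOn (hπ ha)
    obtain ⟨k, -, hk⟩ := (hβ i).surjOn ⟨ha, hi.symm⟩
    exact ⟨(i, k), mem_univ _, hk⟩

section Absorption

variable {J : Set (Set ℕ)} {Y : Type*} {u : ℕ → Y} {R : Set Y}

lemma exists_bijOn_range_union_of_infinite_mem (hJ : IsIdeal J) {E : Set ℕ} (hEJ : E ∈ J)
    (hE : E.Infinite) (hu : Injective u) (hR : R.Countable) (hdisj : Disjoint (range u) R) :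
    ∃ β : ℕ → Y, BijOn β univ (range u ∪ R) ∧ ∀ T, (β ⁻¹' T ∈ J ↔ u ⁻¹' T ∈ J) := by
  classical
  obtain ⟨φ, hφ⟩ := exists_bijOn_of_countable_of_infinite E.to_countable hE
    ((E.to_countable.image u).union hR) ((hE.image hu.injOn).mono subset_union_left)
  refine ⟨E.piecewise φ u, ?_, fun T => hJ.mem_iff_of_sdiff_eq hEJ ?_⟩
  · have hβE := hφ.congr (piecewise_eqOn E φ u).symm
    have hβEc := hu.injOn.bijOn_image.congr (piecewise_eqOn_compl E φ u).symm
    have himages : Disjoint (u '' E ∪ R) (u '' Eᶜ) :=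
      (disjoint_image_of_injective hu disjoint_compl_right).union_left
        (hdisj.symm.mono_right (image_subset_range u _))
    have hβ := hβE.union hβEc ((injOn_union disjoint_compl_right).2 ⟨hβE.injOn, hβEc.injOn,
      fun a ha b hb => himages.ne_of_mem (hβE.mapsTo ha) (hβEc.mapsTo hb)⟩)
    rwa [union_compl_self, union_right_comm, ← image_union, union_compl_self, image_univ] at hβ
  · ext m
    by_cases hm : m ∈ E <;> simp [hm]

lemma exists_bijOn_range_union_of_finite (hu : Injective u) (hR : R.Finite) :
    ∃ β : ℕ → Y, BijOn β univ (range u ∪ R) ∧ ∀ T, ((β ⁻¹' T).Finite ↔ (u ⁻¹' T).Finite) := by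
  obtain ⟨β, hβ⟩ := exists_bijOn_of_countable_of_infinite countable_univ (infinite_univ (α := ℕ))
    ((countable_range u).union hR.countable)
    ((infinite_range_of_injective hu).mono subset_union_left)
  have finite_preimage_iff : ∀ {f : ℕ → Y}, Injective f → ∀ T,
      ((f ⁻¹' T).Finite ↔ (T ∩ range f).Finite) := fun hf T => by
    rw [← image_preimage_eq_inter_range, finite_image_iff hf.injOn]
  have hrange : range β = range u ∪ R := by rw [← image_univ, hβ.image_eq]
  refine ⟨β, hβ, fun T => ?_⟩
  rw [finite_preimage_iff (injOn_univ.1 hβ.injOn), finite_preimage_iff hu, hrange,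
    inter_union_distrib_left, finite_union, and_iff_left (hR.subset inter_subset_right)]

lemma exists_bijOn_range_union (hJ : IsIdeal J) (hu : Injective u) (hdisj : Disjoint (range u) R)
    {v : ℕ → Y} {Q : Set ℕ} (hQ : Q ∈ J) (hRQ : R ⊆ v '' Q) :
    ∃ β : ℕ → Y, BijOn β univ (range u ∪ R) ∧ ∀ T, (β ⁻¹' T ∈ J ↔ u ⁻¹' T ∈ J) := by
  by_cases hinf : ∃ E ∈ J, E.Infinite
  · obtain ⟨E, hEJ, hE⟩ := hinf
    exact exists_bijOn_range_union_of_infinite_mem hJ hEJ hE hu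
      ((Q.to_countable.image v).mono hRQ) hdisj
  · simp only [not_exists, not_and, not_infinite] at hinf
    have hJfin : ∀ E, E ∈ J ↔ E.Finite := fun E => ⟨hinf E, hJ.finite_mem⟩
    obtain ⟨β, hβ, hβfin⟩ :=
      exists_bijOn_range_union_of_finite hu (((hinf Q hQ).image v).subset hRQ)
    exact ⟨β, hβ, fun T => by rw [hJfin, hJfin, hβfin]⟩

end Absorption

section Product

variable {I J : Set (Set ℕ)}

lemma exists_bijOn_column_insert (hJ : IsIdeal J) (hJh : HomogIdeal J) {A : Set (ℕ × ℕ)}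
    {x : ℕ} {Z : Set ℕ} (hx : Prod.mk x ⁻¹' A ∉ J) (hZ : Z.Subsingleton) (hxZ : x ∉ Z)
    (hZJ : ∀ z ∈ Z, Prod.mk z ⁻¹' A ∈ J) :
    ∃ β : ℕ → ℕ × ℕ, BijOn β univ (A ∩ Prod.fst ⁻¹' insert x Z) ∧
      ∀ C ⊆ A, (β ⁻¹' C ∈ J ↔ Prod.mk x ⁻¹' C ∈ J) := by
  obtain ⟨h, hh, hhJ⟩ := hJ.exists_bijOn_of_homogIdeal hJh hx
  have hu : Injective (Prod.mk x ∘ h) :=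
    (Prod.mk_right_injective x).comp (injOn_univ.1 hh.injOn)
  have hrange : range (Prod.mk x ∘ h) = A ∩ Prod.fst ⁻¹' {x} := by
    rw [range_comp, ← image_univ, hh.image_eq]
    ext ⟨a, b⟩
    constructor
    · rintro ⟨b, hb, hab⟩
      cases hab
      exact ⟨hb, rfl⟩
    · rintro ⟨hab, rfl : a = x⟩
      exact ⟨b, hab, rfl⟩
  obtain ⟨v, Q, hQ, hRQ⟩ : ∃ v : ℕ → ℕ × ℕ, ∃ Q ∈ J, A ∩ Prod.fst ⁻¹' Z ⊆ v '' Q := by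
    rcases hZ.eq_empty_or_singleton with rfl | ⟨z, rfl⟩
    · exact ⟨Prod.mk x, ∅, hJ.finite_mem finite_empty, by simp⟩
    · exact ⟨Prod.mk z, _, hZJ z rfl, by rintro ⟨a, b⟩ ⟨hab, rfl⟩; exact ⟨b, hab, rfl⟩⟩
  have hdisj : Disjoint (range (Prod.mk x ∘ h)) (A ∩ Prod.fst ⁻¹' Z) := by
    rw [hrange, Set.disjoint_left]
    rintro p ⟨-, hp⟩ ⟨-, hpZ⟩
    exact hxZ (hp ▸ hpZ)
  obtain ⟨β, hβ, hβJ⟩ := exists_bijOn_range_union hJ hu hdisj hQ hRQ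
  refine ⟨β, ?_, fun C hC => ?_⟩
  · rwa [insert_eq, preimage_union, inter_union_distrib_left, ← hrange]
  · rw [hβJ, hhJ _ (preimage_mono hC)]
    rfl

lemma mem_HF_prodIdeal_of_notMem (hI : IsIdeal I) (hJ : IsIdeal J) (hIh : HomogIdeal I)
    (hJh : HomogIdeal J) {A : Set (ℕ × ℕ)} (hA : A ∉ prodIdeal I J) :
    A ∈ HF (prodIdeal I J) := by
  classical
  set S : Set ℕ := {x | Prod.mk x ⁻¹' A ∉ J}
  have hS : S ∉ I := hA
  obtain ⟨g, hg, hgI⟩ := hI.exists_bijOn_of_homogIdeal hIh hS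
  set σ : ℕ → ℕ := fun n => (hI.infinite_of_notMem hS).natEmbedding S n
  have hσ : Injective σ := Subtype.val_injective.comp (Embedding.injective _)
  have hσS : ∀ n, σ n ∈ S := fun n => ((hI.infinite_of_notMem hS).natEmbedding S n).2
  set π : ℕ × ℕ → ℕ := fun p => if p.1 ∈ S then p.1 else σ p.1
  have hπ : MapsTo π A S := fun p _ => by
    by_cases hp : p.1 ∈ S <;> simp only [π, hp, if_true, if_false, hσS]
  have hfiber : ∀ x ∈ S, A ∩ π ⁻¹' {x} = A ∩ Prod.fst ⁻¹' insert x (Sᶜ ∩ σ ⁻¹' {x}) := by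
    intro x hx
    ext ⟨a, b⟩
    by_cases ha : a ∈ S
    · simp [π, ha]
    · have hax : a ≠ x := fun h => ha (h ▸ hx)
      simp [π, ha, hax]
  have hcol : ∀ n, ∃ β : ℕ → ℕ × ℕ, BijOn β univ (A ∩ π ⁻¹' {g n}) ∧
      ∀ C ⊆ A, (β ⁻¹' C ∈ J ↔ Prod.mk (g n) ⁻¹' C ∈ J) := fun n => by
    have hx := hg.mapsTo (mem_univ n)
    rw [hfiber _ hx]
    exact exists_bijOn_column_insert hJ hJh hx
      ((subsingleton_singleton.preimage hσ).anti inter_subset_right) (fun h => h.1 hx)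
      fun z hz => not_not.1 hz.1
  choose β hβ hβJ using hcol
  refine (hI.prodIdeal hJ).mem_HF_iff.2
    ⟨uncurry β, bijOn_uncurry_of_bijOn_fibers hg hπ hβ, fun C hC => ?_⟩
  have hpre : {n | β n ⁻¹' C ∉ J} = g ⁻¹' {x | Prod.mk x ⁻¹' C ∉ J} := by
    ext n
    exact not_congr (hβJ n C hC)
  change _ ↔ {n | β n ⁻¹' C ∉ J} ∈ I
  rw [hpre]
  exact hgI _ fun x hCx hAx => hCx (hJ.mono hAx (preimage_mono hC))

end Product

/-- the product of homogeneous ideals is homogeneous. -/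
theorem stmt_7 (I J : Set (Set ℕ)) (hI : IsIdeal I) (hJ : IsIdeal J)
    (hIh : HomogIdeal I) (hJh : HomogIdeal J) :
    HomogIdeal (prodIdeal I J) :=
  (hI.prodIdeal hJ).homogIdeal_iff.2 fun _ hA => mem_HF_prodIdeal_of_notMem hI hJ hIh hJh hA
end
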